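/- Let G = W(C_n) be the whiskered cycle, n ≥ 3 odd, say n = 2m+1, and I = I(G). Set M = (x_1x_2)(x_3x_4)⋯(x_{2m-1}x_{2m}), a minimal generator of I^m. Then for any even j with 2 ≤ j ≤ n-1, the sequence x_j, x_{j+1}, x_{j+2}, ..., x_n is an even-connected walk with respect to M; in particular x_j x_n · M ∈ I^{m+1}. -/

import Mathlib

open MvPolynomial
open Fin.NatCast

/-- The whiskered cycle `W(C_n)`: `Sum.inl i` is the cycle vertex `x_{i+1}` and
`Sum.inr i` is the whisker vertex `x_{n+i+1}`. -/
def whiskerCycle (n : ℕ) [NeZero n] : SimpleGraph (Fin n ⊕ Fin n) :=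
  SimpleGraph.fromRel (fun a b =>
    (∃ i : Fin n, a = Sum.inl i ∧ b = Sum.inl (i + 1)) ∨
    (∃ i : Fin n, a = Sum.inl i ∧ b = Sum.inr i))

/-- The edge ideal of a graph `G`. -/
noncomputable def edgeIdeal (K : Type*) [Field K] {V : Type*} (G : SimpleGraph V) :
    Ideal (MvPolynomial V K) :=
  Ideal.span {m | ∃ u v, G.Adj u v ∧ m = X u * X v}

/-!
Write `j = 2r`. The last `m - r` factors of `M` are `x_{j+1}x_{j+2}, …, x_{n-2}x_{n-1}`;
together with `x_j` and `x_n` they form the path `x_j x_{j+1} ⋯ x_n` with an even number of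
vertices, which re-pairs as `(x_j x_{j+1})(x_{j+2}x_{j+3}) ⋯ (x_{n-1}x_n)`, a product of
`m - r + 1` cycle edges. The first `r` factors of `M` are edges as well, so `x_j x_n M` is a
product of `m + 1` edges.
-/

open Finset

lemma X_mul_X_mem_edgeIdeal (K : Type*) [Field K] {V : Type*} {G : SimpleGraph V} {u v : V}
    (h : G.Adj u v) : X u * X v ∈ edgeIdeal K G :=
  Ideal.subset_span ⟨u, v, h, rfl⟩

lemma Ideal.prod_range_mem_pow {R : Type*} [CommSemiring R] (I : Ideal R) {k : ℕ}
    {f : ℕ → R} (hf : ∀ t < k, f t ∈ I) : ∏ t ∈ range k, f t ∈ I ^ k := by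
  simpa using Ideal.prod_mem_prod (I := fun _ => I) fun t ht => hf t (mem_range.1 ht)

lemma mul_prod_range_odd_pairs_mul {M : Type*} [CommMonoid M] (g : ℕ → M) (k : ℕ) :
    g 0 * (∏ t ∈ range k, g (2 * t + 1) * g (2 * t + 2)) * g (2 * k + 1) =
      ∏ t ∈ range (k + 1), g (2 * t) * g (2 * t + 1) := by
  induction k with
  | zero => simp
  | succ k ih =>
    rw [prod_range_succ, prod_range_succ _ (k + 1), ← ih]
    simp only [mul_add, mul_one]
    ac_rfl

namespace whiskerCycle

variable {n : ℕ} [NeZero n]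

lemma adj_succ (hn : 1 < n) (i : Fin n) : (whiskerCycle n).Adj (Sum.inl i) (Sum.inl (i + 1)) := by
  rw [whiskerCycle, SimpleGraph.fromRel_adj]
  refine ⟨fun h => ?_, Or.inl (Or.inl ⟨i, rfl, rfl⟩)⟩
  have h1 : (1 : Fin n) = 0 := by simpa using Sum.inl_injective h
  simpa [Nat.mod_eq_of_lt hn] using congrArg Fin.val h1

lemma adj_natCast_succ (hn : 1 < n) (a : ℕ) :
    (whiskerCycle n).Adj (Sum.inl (a : Fin n)) (Sum.inl ((a + 1 : ℕ) : Fin n)) := by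
  rw [Nat.cast_succ]
  exact adj_succ hn _

lemma eq_of_sym2_natCast_eq {a b : ℕ} (ha : a + 1 < n) (hb : b + 1 < n)
    (h : s((Sum.inl (a : Fin n) : Fin n ⊕ Fin n), Sum.inl ((a + 1 : ℕ) : Fin n)) =
      s(Sum.inl (b : Fin n), Sum.inl ((b + 1 : ℕ) : Fin n))) : a = b := by
  have inl_cast_inj {c d : ℕ} (hc : c < n) (hd : d < n)
      (h : (Sum.inl (c : Fin n) : Fin n ⊕ Fin n) = Sum.inl (d : Fin n)) : c = d := by
    simpa [Fin.val_cast_of_lt hc, Fin.val_cast_of_lt hd] using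
      congrArg Fin.val (Sum.inl_injective h)
  rcases Sym2.eq_iff.1 h with ⟨h1, -⟩ | ⟨h1, h2⟩
  · exact inl_cast_inj (by omega) (by omega) h1
  · have := inl_cast_inj (by omega) (by omega) h1
    have := inl_cast_inj (by omega) (by omega) h2
    omega

lemma X_mul_X_mul_prod_mem_pow (K : Type*) [Field K] (hn : 1 < n) {r : ℕ} (hr : 1 ≤ r)
    (k : ℕ) :
    X (Sum.inl ((2 * r - 1 : ℕ) : Fin n)) * X (Sum.inl ((2 * (r + k) : ℕ) : Fin n)) *
      ∏ t ∈ range (r + k), X (Sum.inl ((2 * t : ℕ) : Fin n)) *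
        X (Sum.inl ((2 * t + 1 : ℕ) : Fin n)) ∈
      edgeIdeal K (whiskerCycle n) ^ (r + k + 1) := by
  set g : ℕ → MvPolynomial (Fin n ⊕ Fin n) K :=
    fun i => X (Sum.inl ((2 * r - 1 + i : ℕ) : Fin n))
  have hsplit : ∏ t ∈ range (r + k), X (Sum.inl ((2 * t : ℕ) : Fin n)) *
        X (Sum.inl ((2 * t + 1 : ℕ) : Fin n)) =
      (∏ t ∈ range r, X (Sum.inl ((2 * t : ℕ) : Fin n)) *
        X (Sum.inl ((2 * t + 1 : ℕ) : Fin n))) *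
      ∏ t ∈ range k, g (2 * t + 1) * g (2 * t + 2) := by
    rw [prod_range_add]
    congr 1
    refine prod_congr rfl fun t _ => ?_
    simp only [g, show 2 * r - 1 + (2 * t + 1) = 2 * (r + t) by omega,
      show 2 * r - 1 + (2 * t + 2) = 2 * (r + t) + 1 by omega]
  have hends : X (Sum.inl ((2 * r - 1 : ℕ) : Fin n)) * X (Sum.inl ((2 * (r + k) : ℕ) : Fin n)) =
      g 0 * g (2 * k + 1) := by
    simp only [g, add_zero, show 2 * r - 1 + (2 * k + 1) = 2 * (r + k) by omega]
  have hfirst := Ideal.prod_range_mem_pow (edgeIdeal K (whiskerCycle n)) (k := r)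
    fun t _ => X_mul_X_mem_edgeIdeal K (adj_natCast_succ hn (2 * t))
  have hpath : g 0 * (∏ t ∈ range k, g (2 * t + 1) * g (2 * t + 2)) * g (2 * k + 1) ∈
      edgeIdeal K (whiskerCycle n) ^ (k + 1) := by
    rw [mul_prod_range_odd_pairs_mul]
    exact Ideal.prod_range_mem_pow _ fun t _ => X_mul_X_mem_edgeIdeal K <| by
      simpa only [g, ← add_assoc] using adj_natCast_succ hn (2 * r - 1 + 2 * t)
  rw [hsplit, hends, add_assoc, pow_add]
  convert Ideal.mul_mem_mul hfirst hpath using 1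
  ring

end whiskerCycle

theorem even_walk_to_xn_general (K : Type*) [Field K] (n m : ℕ) [NeZero n]
    (hn : n = 2 * m + 1)
    (M : MvPolynomial (Fin n ⊕ Fin n) K)
    (hM : M = ∏ t ∈ Finset.range m,
      X (Sum.inl ((2 * t : ℕ) : Fin n)) * X (Sum.inl ((2 * t + 1 : ℕ) : Fin n)))
    (j : ℕ) (hj2 : 2 ≤ j) (hjn : j ≤ n - 1) (hje : Even j) :
    (∀ k < n - j, (whiskerCycle n).Adj (Sum.inl ((j - 1 + k : ℕ) : Fin n))
        (Sum.inl ((j - 1 + (k + 1) : ℕ) : Fin n))) ∧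
    (∀ k : ℕ, 2 * k + 2 ≤ n - j → ∃ t < m,
      s((Sum.inl ((j - 1 + (2 * k + 1) : ℕ) : Fin n) : Fin n ⊕ Fin n),
          Sum.inl ((j - 1 + (2 * k + 2) : ℕ) : Fin n)) =
        s(Sum.inl ((2 * t : ℕ) : Fin n), Sum.inl ((2 * t + 1 : ℕ) : Fin n))) ∧
    (∀ t < m,
      {k : ℕ | 2 * k + 2 ≤ n - j ∧
        s((Sum.inl ((j - 1 + (2 * k + 1) : ℕ) : Fin n) : Fin n ⊕ Fin n),
            Sum.inl ((j - 1 + (2 * k + 2) : ℕ) : Fin n)) =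
          s(Sum.inl ((2 * t : ℕ) : Fin n), Sum.inl ((2 * t + 1 : ℕ) : Fin n))}.ncard ≤ 1) ∧
    X (Sum.inl ((j - 1 : ℕ) : Fin n)) * X (Sum.inl ((n - 1 : ℕ) : Fin n)) * M ∈
      edgeIdeal K (whiskerCycle n) ^ (m + 1) := by
  obtain ⟨r, rfl⟩ := hje
  obtain ⟨k, rfl⟩ : ∃ k, m = r + k := ⟨m - r, by omega⟩
  have hn1 : 1 < n := by omega
  have odd_step (i : ℕ) : r + r - 1 + (2 * i + 1) = 2 * (r + i) := by omega
  have even_step (i : ℕ) : r + r - 1 + (2 * i + 2) = 2 * (r + i) + 1 := by omega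
  refine ⟨fun i _ => ?_, fun i _ => ⟨r + i, by omega, by rw [odd_step, even_step]⟩,
    fun t ht => ?_, ?_⟩
  · rw [← add_assoc]
    exact whiskerCycle.adj_natCast_succ hn1 _
  · calc _ ≤ ({t - r} : Set ℕ).ncard := Set.ncard_le_ncard ?_ (Set.finite_singleton _)
      _ = 1 := Set.ncard_singleton _
    rintro i ⟨hi, he⟩
    rw [odd_step, even_step] at he
    have := whiskerCycle.eq_of_sym2_natCast_eq (by omega) (by omega) he
    rw [Set.mem_singleton_iff]
    omega
  rw [hM, show r + r - 1 = 2 * r - 1 by omega, show n - 1 = 2 * (r + k) by omega]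
  exact whiskerCycle.X_mul_X_mul_prod_mem_pow K hn1 (by omega) k

/-- let `n = 2m+1` be odd, `G = W(C_n)` and
`M = (x_1x_2)(x_3x_4)⋯(x_{2m-1}x_{2m})`, a minimal generator of `I^m`.  For
any even `j` with `2 ≤ j ≤ n-1` the sequence `x_j, x_{j+1}, …, x_n`
(formally `p k = x_{j+k} = Sum.inl (j-1+k)`, `0 ≤ k ≤ n-j`) is an
even-connected walk with respect to `M`: consecutive vertices are adjacent,
every odd-position edge `{p_{2k+1}, p_{2k+2}}` is one of the edges
`x_{2t+1}x_{2t+2}` (`t < m`) of `M`, and each such edge is used at most once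
(its multiplicity in `M`); in particular `x_j x_n · M ∈ I^{m+1}`. -/
theorem even_walk_to_xn (K : Type*) [Field K] (n m : ℕ) [NeZero n]
    (hn : n = 2 * m + 1) (hm : 1 ≤ m)
    (M : MvPolynomial (Fin n ⊕ Fin n) K)
    (hM : M = ∏ t ∈ Finset.range m,
      X (Sum.inl ((2 * t : ℕ) : Fin n)) * X (Sum.inl ((2 * t + 1 : ℕ) : Fin n)))
    (j : ℕ) (hj2 : 2 ≤ j) (hjn : j ≤ n - 1) (hje : Even j) :
    (∀ k < n - j, (whiskerCycle n).Adj (Sum.inl ((j - 1 + k : ℕ) : Fin n))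
        (Sum.inl ((j - 1 + (k + 1) : ℕ) : Fin n))) ∧
    (∀ k : ℕ, 2 * k + 2 ≤ n - j → ∃ t < m,
      s((Sum.inl ((j - 1 + (2 * k + 1) : ℕ) : Fin n) : Fin n ⊕ Fin n),
          Sum.inl ((j - 1 + (2 * k + 2) : ℕ) : Fin n)) =
        s(Sum.inl ((2 * t : ℕ) : Fin n), Sum.inl ((2 * t + 1 : ℕ) : Fin n))) ∧
    (∀ t < m,
      {k : ℕ | 2 * k + 2 ≤ n - j ∧
        s((Sum.inl ((j - 1 + (2 * k + 1) : ℕ) : Fin n) : Fin n ⊕ Fin n),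
            Sum.inl ((j - 1 + (2 * k + 2) : ℕ) : Fin n)) =
          s(Sum.inl ((2 * t : ℕ) : Fin n), Sum.inl ((2 * t + 1 : ℕ) : Fin n))}.ncard ≤ 1) ∧
    X (Sum.inl ((j - 1 : ℕ) : Fin n)) * X (Sum.inl ((n - 1 : ℕ) : Fin n)) * M ∈
      edgeIdeal K (whiskerCycle n) ^ (m + 1) :=
  even_walk_to_xn_general K n m hn M hM j hj2 hjn hje
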